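/- Vanishing, degree and symmetry for the weighted dessin d'enfant enumeration: for all integers g ≥ 0, n ≥ 1 and μ_1, …, μ_n ≥ 1 with |μ| = μ_1 + ⋯ + μ_n, if |μ| < 2g + n then D^t_{g,n}(μ_1, …, μ_n) = 0; and if |μ| ≥ 2g + n then D^t_{g,n}(μ_1, …, μ_n) is a nonzero polynomial in t of degree exactly |μ| + 1 − 2g − n whose coefficients a_i (of t^i) satisfy the palindromic symmetry a_i = a_{|μ| + 2 − 2g − n − i} for all i. -/

import Mathlib

open scoped Classical

/-- The number of cycles of `π ∈ S_d`, counting fixed points as cycles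
(so the identity has `d` cycles). -/
def cycleCount {d : ℕ} (π : Equiv.Perm (Fin d)) : ℕ :=
  π.cycleType.card + (d - π.support.card)

/-- The permutation of `Fin μ.sum` whose cycles are the consecutive blocks of sizes
`μ_1, μ_2, …`, each cyclically permuted. -/
def blockPerm : (μ : List ℕ) → Equiv.Perm (Fin μ.sum)
  | [] => 1
  | m :: rest =>
      (finCongr (by simp) : Fin (m + rest.sum) ≃ Fin ((m :: rest).sum)).permCongr
        (finSumFinEquiv.permCongr ((finRotate m).sumCongr (blockPerm rest)))

/-- The subgroup generated by `p` and `q` acts transitively on `Fin d`. -/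
def IsTransitivePair {d : ℕ} (p q : Equiv.Perm (Fin d)) : Prop :=
  ∀ x y : Fin d, ∃ g ∈ Subgroup.closure {p, q}, g x = y

/-- The weighted dessin d'enfant enumeration `D^t_{g,n}(μ_1, …, μ_n) ∈ ℚ[t]`:
`(μ_1 ⋯ μ_n)⁻¹ ∑ t^{c(π₁)}`, the sum over pairs `(π₁, π₂)` of permutations of
`Fin |μ|` with `π₁ π₂ = σ_μ`, generating a transitive subgroup, and with
`c(π₁) + c(π₂) = |μ| + 2 - 2g - n`.  It is `0` by convention if `g < 0` or some
part `μ_i` is `0`. -/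
noncomputable def dessin (g : ℤ) (μ : List ℕ) : Polynomial ℚ :=
  if 0 ≤ g ∧ ∀ m ∈ μ, 1 ≤ m then
    ((μ.map fun m => (m : ℚ)).prod)⁻¹ •
      ∑ p ∈ Finset.univ.filter
          (fun p : Equiv.Perm (Fin μ.sum) × Equiv.Perm (Fin μ.sum) =>
            p.1 * p.2 = blockPerm μ ∧ IsTransitivePair p.1 p.2 ∧
            (cycleCount p.1 + cycleCount p.2 : ℤ)
              = (μ.sum : ℤ) + 2 - 2 * g - μ.length),
        Polynomial.X ^ cycleCount p.1
  else 0


namespace DessinAux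
open Equiv Equiv.Perm Finset

set_option linter.unusedSectionVars false
set_option maxHeartbeats 1000000

variable {α : Type*} [DecidableEq α] [Fintype α]

noncomputable def cls (π : Perm α) (x : α) : Finset α := univ.filter fun y => π.SameCycle x y

lemma mem_cls {π : Perm α} {x y : α} : y ∈ cls π x ↔ π.SameCycle x y := by simp [cls]

lemma self_mem_cls {π : Perm α} {x : α} : x ∈ cls π x := mem_cls.2 (SameCycle.refl _ _)

lemma cls_eq_cls {π : Perm α} {x y : α} (h : π.SameCycle x y) : cls π x = cls π y := by
  ext z
  simp only [mem_cls]
  exact ⟨fun h' => h.symm.trans h', fun h' => h.trans h'⟩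

lemma sameCycle_of_cls_eq {π : Perm α} {x y : α} (h : cls π x = cls π y) : π.SameCycle x y := by
  have : y ∈ cls π x := h ▸ self_mem_cls
  exact mem_cls.1 this

noncomputable def nOrbits (π : Perm α) : ℕ := (univ.image (cls π)).card

lemma cls_inv (π : Perm α) : cls π⁻¹ = cls π := by
  funext x; ext y; simp [mem_cls]

lemma nOrbits_inv (π : Perm α) : nOrbits π⁻¹ = nOrbits π := by
  unfold nOrbits; rw [cls_inv]

lemma sameCycle_mul_swap {π : Perm α} {a b x y : α} :
    (π * Equiv.swap a b).SameCycle x y ↔ (Equiv.swap a b * π⁻¹).SameCycle x y := by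
  rw [← Equiv.Perm.sameCycle_inv, mul_inv_rev, Equiv.swap_inv]

lemma nOrbits_mul_swap (π : Perm α) (a b : α) :
    nOrbits (π * Equiv.swap a b) = nOrbits (Equiv.swap a b * π⁻¹) := by
  rw [← nOrbits_inv (π * Equiv.swap a b), mul_inv_rev, Equiv.swap_inv]

lemma one_le_nOrbits [Nonempty α] (π : Perm α) : 1 ≤ nOrbits π := by
  rw [Nat.one_le_iff_ne_zero, ← Nat.pos_iff_ne_zero]
  exact Finset.card_pos.2 ((Finset.univ_nonempty).image _)

lemma exists_not_sameCycle {π : Perm α} (h : 2 ≤ nOrbits π) (w : α) :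
    ∃ z, ¬π.SameCycle w z := by
  by_contra hc
  push_neg at hc
  have hsub : univ.image (cls π) ⊆ {cls π w} := by
    intro s hs
    obtain ⟨x, -, rfl⟩ := Finset.mem_image.1 hs
    simp [cls_eq_cls (hc x).symm]
  have h2 := Finset.card_le_card hsub
  simp only [Finset.card_singleton] at h2
  simp only [nOrbits] at h
  omega

lemma nOrbits_eq_one_of_total [Nonempty α] {π : Perm α} (h : ∀ x y, π.SameCycle x y) :
    nOrbits π = 1 := by
  have x₀ : α := Classical.arbitrary α
  have hsub : univ.image (cls π) ⊆ {cls π x₀} := by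
    intro s hs
    obtain ⟨x, -, rfl⟩ := Finset.mem_image.1 hs
    simp [cls_eq_cls (h x x₀)]
  have h1 := Finset.card_le_card hsub
  have h2 := one_le_nOrbits (α := α) π
  simp only [Finset.card_singleton] at h1
  simp only [nOrbits] at h2 ⊢
  omega

lemma nOrbits_one : nOrbits (1 : Perm α) = Fintype.card α := by
  have hcls : ∀ x : α, cls (1 : Perm α) x = {x} := by
    intro x; ext y
    simp only [mem_cls, Finset.mem_singleton]
    constructor
    · rintro ⟨i, hi⟩; simp only [one_zpow, Equiv.Perm.one_apply] at hi; exact hi.symm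
    · rintro rfl; exact SameCycle.refl _ _
  unfold nOrbits
  have : Finset.image (cls (1 : Perm α)) univ = univ.image (fun x => ({x} : Finset α)) := by
    apply Finset.image_congr; intro x _; exact hcls x
  rw [this, Finset.card_image_of_injective _ Finset.singleton_injective, Finset.card_univ]




lemma sameCycle_of_closed {π : Perm α} {R : α → α → Prop}
    (hrefl : ∀ x, R x x)
    (hstep : ∀ x y, R x y → R x (π y))
    (hstep' : ∀ x y, R x y → R x (π⁻¹ y)) :
    ∀ x y, π.SameCycle x y → R x y := by
  have key : ∀ (i : ℤ) (x : α), R x ((π ^ i) x) := by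
    intro i
    induction i using Int.induction_on with
    | zero => intro x; simpa using hrefl x
    | succ k ih =>
      intro x
      have he : (π ^ ((k : ℤ) + 1)) x = π ((π ^ (k : ℤ)) x) := by
        rw [add_comm, zpow_add, zpow_one, Equiv.Perm.mul_apply]
      rw [he]
      exact hstep _ _ (ih x)
    | pred k ih =>
      intro x
      have he : (π ^ (-(k : ℤ) - 1)) x = π⁻¹ ((π ^ (-(k : ℤ))) x) := by
        rw [sub_eq_neg_add, zpow_add, zpow_neg_one, Equiv.Perm.mul_apply]
      rw [he]
      exact hstep' _ _ (ih x)
  rintro x y ⟨i, hi⟩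
  exact hi ▸ key i x

/-- one-step closure facts -/
lemma sc_apply {π : Perm α} {x y : α} (h : π.SameCycle x y) : π.SameCycle x (π y) :=
  Equiv.Perm.sameCycle_apply_right.2 h

theorem sameCycle_swap_mul_iff {π : Perm α} {a b : α} (h : ¬π.SameCycle a b) (x y : α) :
    (Equiv.swap a b * π).SameCycle x y ↔
      π.SameCycle x y ∨ (π.SameCycle a x ∧ π.SameCycle b y) ∨
        (π.SameCycle b x ∧ π.SameCycle a y) := by
  have hab : a ≠ b := fun e => h (e ▸ SameCycle.refl _ _)
  set ρ := Equiv.swap a b * π with hρ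
  constructor
  · refine sameCycle_of_closed (R := fun x y => π.SameCycle x y ∨ (π.SameCycle a x ∧ π.SameCycle b y) ∨
        (π.SameCycle b x ∧ π.SameCycle a y)) ?_ ?_ ?_ x y
    · intro x; exact Or.inl (SameCycle.refl _ _)
    · -- step forward
      intro x y hxy
      have happ : ρ y = Equiv.swap a b (π y) := rfl
      by_cases h1 : π y = a
      · have hb : ρ y = b := by rw [happ, h1, Equiv.swap_apply_left]
        have hya : π.SameCycle y a := ⟨1, by simpa using h1⟩
        rw [hb]
        rcases hxy with h2 | ⟨h2, h3⟩ | ⟨h2, h3⟩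
        · exact Or.inr (Or.inl ⟨(h2.trans hya).symm, SameCycle.refl _ _⟩)
        · exact absurd (h3.trans hya).symm h
        · exact Or.inl h2.symm
      · by_cases h2' : π y = b
        · have hb : ρ y = a := by rw [happ, h2', Equiv.swap_apply_right]
          have hyb : π.SameCycle y b := ⟨1, by simpa using h2'⟩
          rw [hb]
          rcases hxy with h2 | ⟨h2, h3⟩ | ⟨h2, h3⟩
          · exact Or.inr (Or.inr ⟨(h2.trans hyb).symm, SameCycle.refl _ _⟩)
          · exact Or.inl h2.symm
          · exact absurd (h3.trans hyb) h
        · have hb : ρ y = π y := by rw [happ, Equiv.swap_apply_of_ne_of_ne h1 h2']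
          rw [hb]
          rcases hxy with h2 | ⟨h2, h3⟩ | ⟨h2, h3⟩
          · exact Or.inl (sc_apply h2)
          · exact Or.inr (Or.inl ⟨h2, sc_apply h3⟩)
          · exact Or.inr (Or.inr ⟨h2, sc_apply h3⟩)
    · -- step backward
      intro x y hxy
      have happ : ρ⁻¹ y = π⁻¹ (Equiv.swap a b y) := by
        rw [hρ, mul_inv_rev, Equiv.swap_inv, Equiv.Perm.mul_apply]
      by_cases h1 : y = a
      · subst h1
        have hb : ρ⁻¹ y = π⁻¹ b := by rw [happ, Equiv.swap_apply_left]
        rw [hb]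
        rcases hxy with h2 | ⟨h2, h3⟩ | ⟨h2, h3⟩
        · exact Or.inr (Or.inl ⟨h2.symm, Equiv.Perm.sameCycle_symm_apply_right.2 (SameCycle.refl _ _)⟩)
        · exact absurd h3.symm h
        · exact Or.inl (Equiv.Perm.sameCycle_symm_apply_right.2 h2.symm)
      · by_cases h2' : y = b
        · subst h2'
          have hb : ρ⁻¹ y = π⁻¹ a := by rw [happ, Equiv.swap_apply_right]
          rw [hb]
          rcases hxy with h2 | ⟨h2, h3⟩ | ⟨h2, h3⟩
          · exact Or.inr (Or.inr ⟨h2.symm, Equiv.Perm.sameCycle_symm_apply_right.2 (SameCycle.refl _ _)⟩)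
          · exact Or.inl (Equiv.Perm.sameCycle_symm_apply_right.2 h2.symm)
          · exact absurd h3 h
        · have hb : ρ⁻¹ y = π⁻¹ y := by rw [happ, Equiv.swap_apply_of_ne_of_ne h1 h2']
          rw [hb]
          rcases hxy with h2 | ⟨h2, h3⟩ | ⟨h2, h3⟩
          · exact Or.inl (Equiv.Perm.sameCycle_symm_apply_right.2 h2)
          · exact Or.inr (Or.inl ⟨h2, Equiv.Perm.sameCycle_symm_apply_right.2 h3⟩)
          · exact Or.inr (Or.inr ⟨h2, Equiv.Perm.sameCycle_symm_apply_right.2 h3⟩)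
  · -- backward direction
    -- first: SameCycle ρ a b
    have hex : ∃ nn : ℕ, 0 < nn ∧ (π ^ nn) a = a := by
      refine ⟨orderOf π, ?_, by rw [pow_orderOf_eq_one]; rfl⟩
      exact orderOf_pos π
    have hNspec := Nat.find_spec hex
    set N := Nat.find hex with hNdef
    have hNmin : ∀ m, m < N → ¬(0 < m ∧ (π ^ m) a = a) := fun m hm => Nat.find_min hex hm
    have hsub : ∀ j : ℕ, j + 1 < N → ρ ((π ^ j) a) = (π ^ (j + 1)) a := by
      intro j hj
      have h1 : ρ ((π ^ j) a) = Equiv.swap a b ((π ^ (j + 1)) a) := by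
        rw [hρ, Equiv.Perm.mul_apply, pow_succ', Equiv.Perm.mul_apply]
      have hne1 : (π ^ (j + 1)) a ≠ a := fun e => (hNmin (j + 1) hj) ⟨Nat.succ_pos j, e⟩
      have hne2 : (π ^ (j + 1)) a ≠ b := fun e => h ⟨(j + 1 : ℕ), by rw [zpow_natCast]; exact e⟩
      rw [h1, Equiv.swap_apply_of_ne_of_ne hne1 hne2]
    have hclaim : ∀ j : ℕ, j < N → (ρ ^ j) a = (π ^ j) a := by
      intro j
      induction j with
      | zero => intro _; simp
      | succ k ih =>
        intro hk
        have hk' : k < N := Nat.lt_of_succ_lt hk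
        rw [pow_succ', Equiv.Perm.mul_apply, ih hk', hsub k hk]
    have hρab : ρ.SameCycle a b := by
      refine ⟨(N : ℤ), ?_⟩
      rw [zpow_natCast]
      obtain ⟨hN0, hNa⟩ := hNspec
      have hN1 : N - 1 + 1 = N := Nat.succ_pred_eq_of_pos hN0
      have h1 : (ρ ^ N) a = ρ ((ρ ^ (N - 1)) a) := by
        conv_lhs => rw [← hN1]
        rw [pow_succ', Equiv.Perm.mul_apply]
      rw [h1, hclaim (N - 1) (by omega), hρ, Equiv.Perm.mul_apply]
      have h2 : π ((π ^ (N - 1)) a) = (π ^ N) a := by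
        conv_rhs => rw [← hN1]
        rw [pow_succ', Equiv.Perm.mul_apply]
      rw [h2, hNa, Equiv.swap_apply_left]
    -- SameCycle π x y → SameCycle ρ x y
    have hlift : ∀ x y, π.SameCycle x y → ρ.SameCycle x y := by
      refine sameCycle_of_closed (R := fun x y => ρ.SameCycle x y) ?_ ?_ ?_
      · intro x; exact SameCycle.refl _ _
      · intro x y hxy
        have happ : π y = Equiv.swap a b (ρ y) := by
          rw [hρ, Equiv.Perm.mul_apply, Equiv.swap_apply_self]
        by_cases h1 : ρ y = a
        · have : π y = b := by rw [happ, h1, Equiv.swap_apply_left]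
          rw [this]
          exact (hxy.trans ⟨1, by simpa using h1⟩).trans hρab
        · by_cases h2 : ρ y = b
          · have : π y = a := by rw [happ, h2, Equiv.swap_apply_right]
            rw [this]
            exact (hxy.trans ⟨1, by simpa using h2⟩).trans hρab.symm
          · have : π y = ρ y := by rw [happ, Equiv.swap_apply_of_ne_of_ne h1 h2]
            rw [this]
            exact sc_apply hxy
      · intro x y hxy
        have happ : π⁻¹ y = ρ⁻¹ (Equiv.swap a b y) := by
          rw [hρ, mul_inv_rev, Equiv.swap_inv, Equiv.Perm.mul_apply, Equiv.swap_apply_self]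
        by_cases h1 : y = a
        · subst h1
          have : π⁻¹ y = ρ⁻¹ b := by rw [happ, Equiv.swap_apply_left]
          rw [this]
          exact Equiv.Perm.sameCycle_symm_apply_right.2 (hxy.trans hρab)
        · by_cases h2 : y = b
          · subst h2
            have : π⁻¹ y = ρ⁻¹ a := by rw [happ, Equiv.swap_apply_right]
            rw [this]
            exact Equiv.Perm.sameCycle_symm_apply_right.2 (hxy.trans hρab.symm)
          · have : π⁻¹ y = ρ⁻¹ y := by rw [happ, Equiv.swap_apply_of_ne_of_ne h1 h2]
            rw [this]
            exact Equiv.Perm.sameCycle_symm_apply_right.2 hxy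
    rintro (h2 | ⟨h2, h3⟩ | ⟨h2, h3⟩)
    · exact hlift _ _ h2
    · exact ((hlift _ _ h2).symm.trans hρab).trans (hlift _ _ h3)
    · exact ((hlift _ _ h2).symm.trans hρab.symm).trans (hlift _ _ h3)

theorem nOrbits_swap_mul {π : Perm α} {a b : α} (h : ¬π.SameCycle a b) :
    nOrbits π = nOrbits (Equiv.swap a b * π) + 1 := by
  classical
  have hab : a ≠ b := fun e => h (e ▸ SameCycle.refl _ _)
  set ρ := Equiv.swap a b * π with hρ
  set A := cls π a with hA
  set B := cls π b with hB
  set U : Finset α := A ∪ B with hU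
  have hmemA : ∀ x, x ∈ A ↔ π.SameCycle a x := fun x => mem_cls
  have hmemB : ∀ x, x ∈ B ↔ π.SameCycle b x := fun x => mem_cls
  have hdesc := sameCycle_swap_mul_iff h
  -- cls of ρ off U is unchanged
  have hoff : ∀ x, x ∉ U → cls ρ x = cls π x := by
    intro x hx
    rw [hU, Finset.mem_union, hmemA, hmemB] at hx
    push_neg at hx
    ext y
    simp only [mem_cls, hρ, hdesc]
    constructor
    · rintro (h1 | ⟨h1, h2⟩ | ⟨h1, h2⟩)
      · exact h1
      · exact absurd h1 hx.1
      · exact absurd h1 hx.2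
    · exact fun h1 => Or.inl h1
  -- cls of ρ on U is U
  have hon : ∀ x, x ∈ U → cls ρ x = U := by
    intro x hx
    rw [hU, Finset.mem_union, hmemA, hmemB] at hx
    ext y
    simp only [mem_cls, hρ, hdesc, hU, Finset.mem_union, hmemA, hmemB]
    rcases hx with hx | hx
    · constructor
      · rintro (h1 | ⟨h1, h2⟩ | ⟨h1, h2⟩)
        · exact Or.inl (hx.trans h1)
        · exact Or.inr h2
        · exact absurd (hx.trans h1.symm) h
      · rintro (hy | hy)
        · exact Or.inl (hx.symm.trans hy)
        · exact Or.inr (Or.inl ⟨hx, hy⟩)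
    · constructor
      · rintro (h1 | ⟨h1, h2⟩ | ⟨h1, h2⟩)
        · exact Or.inr (hx.trans h1)
        · exact absurd (hx.trans h1.symm).symm h
        · exact Or.inl h2
      · rintro (hy | hy)
        · exact Or.inr (Or.inr ⟨hx, hy⟩)
        · exact Or.inl (hx.symm.trans hy)
  have haU : a ∈ U := Finset.mem_union_left _ (self_mem_cls)
  have hbU : b ∈ U := Finset.mem_union_right _ (self_mem_cls)
  set T : Finset (Finset α) := (univ \ U).image (cls π) with hT
  have hUT : U ∉ T := by
    intro hc
    obtain ⟨x, hx1, hx2⟩ := Finset.mem_image.1 hc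
    rw [Finset.mem_sdiff] at hx1
    exact hx1.2 (hx2 ▸ self_mem_cls)
  have hAT : A ∉ T := by
    intro hc
    obtain ⟨x, hx1, hx2⟩ := Finset.mem_image.1 hc
    rw [Finset.mem_sdiff] at hx1
    exact hx1.2 (Finset.mem_union_left _ (hx2 ▸ self_mem_cls))
  have hBT : B ∉ T := by
    intro hc
    obtain ⟨x, hx1, hx2⟩ := Finset.mem_image.1 hc
    rw [Finset.mem_sdiff] at hx1
    exact hx1.2 (Finset.mem_union_right _ (hx2 ▸ self_mem_cls))
  have hANB : A ≠ B := by
    intro hc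
    apply h
    have hb : b ∈ A := by rw [hc]; exact self_mem_cls
    exact mem_cls.1 hb
  -- image of cls ρ
  have himρ : univ.image (cls ρ) = insert U T := by
    ext s
    simp only [Finset.mem_image, Finset.mem_insert, hT]
    constructor
    · rintro ⟨x, -, rfl⟩
      by_cases hx : x ∈ U
      · exact Or.inl (hon x hx)
      · exact Or.inr ⟨x, Finset.mem_sdiff.2 ⟨Finset.mem_univ _, hx⟩, (hoff x hx).symm⟩
    · rintro (rfl | ⟨x, hx, rfl⟩)
      · exact ⟨a, Finset.mem_univ _, hon a haU⟩
      · rw [Finset.mem_sdiff] at hx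
        exact ⟨x, Finset.mem_univ _, hoff x hx.2⟩
  have himπ : univ.image (cls π) = insert A (insert B T) := by
    ext s
    simp only [Finset.mem_image, Finset.mem_insert, hT]
    constructor
    · rintro ⟨x, -, rfl⟩
      by_cases hx : x ∈ U
      · rw [hU, Finset.mem_union, hmemA, hmemB] at hx
        rcases hx with hx | hx
        · exact Or.inl (cls_eq_cls hx).symm
        · exact Or.inr (Or.inl (cls_eq_cls hx).symm)
      · exact Or.inr (Or.inr ⟨x, Finset.mem_sdiff.2 ⟨Finset.mem_univ _, hx⟩, rfl⟩)
    · rintro (rfl | rfl | ⟨x, hx, rfl⟩)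
      · exact ⟨a, Finset.mem_univ _, rfl⟩
      · exact ⟨b, Finset.mem_univ _, rfl⟩
      · exact ⟨x, Finset.mem_univ _, rfl⟩
  unfold nOrbits
  rw [himρ, himπ]
  rw [Finset.card_insert_of_notMem hUT,
    Finset.card_insert_of_notMem (by simp only [Finset.mem_insert]; push_neg; exact ⟨hANB, hAT⟩),
    Finset.card_insert_of_notMem hBT]

theorem not_sameCycle_swap_mul {π : Perm α} {a b : α} (hab : a ≠ b) (hsc : π.SameCycle a b) :
    ¬(Equiv.swap a b * π).SameCycle a b := by
  classical
  set ρ := Equiv.swap a b * π with hρ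
  have hex : ∃ nn : ℕ, (π ^ nn) a = b := by
    obtain ⟨i, -, hi⟩ := hsc.exists_pow_eq'
    exact ⟨i, hi⟩
  set k := Nat.find hex with hkdef
  have hkspec : (π ^ k) a = b := Nat.find_spec hex
  have hkmin : ∀ m, m < k → (π ^ m) a ≠ b := fun m hm => Nat.find_min hex hm
  have hk0 : 0 < k := by
    rcases Nat.eq_zero_or_pos k with h0 | h0
    · exfalso; apply hab; have := hkspec; rw [h0, pow_zero] at this; exact this
    · exact h0
  have hsub : ∀ j : ℕ, j + 1 < k → ρ ((π ^ j) a) = (π ^ (j + 1)) a := by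
    intro j hj
    have h1 : ρ ((π ^ j) a) = Equiv.swap a b ((π ^ (j + 1)) a) := by
      rw [hρ, Equiv.Perm.mul_apply, pow_succ', Equiv.Perm.mul_apply]
    have hne2 : (π ^ (j + 1)) a ≠ b := hkmin (j + 1) hj
    have hne1 : (π ^ (j + 1)) a ≠ a := by
      intro e
      have harith : (k - (j + 1)) + (j + 1) = k := by omega
      have : (π ^ k) a = (π ^ (k - (j + 1))) a := by
        calc (π ^ k) a = (π ^ (k - (j + 1)) * π ^ (j + 1)) a := by rw [← pow_add, harith]
        _ = (π ^ (k - (j + 1))) ((π ^ (j + 1)) a) := Equiv.Perm.mul_apply _ _ _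
        _ = (π ^ (k - (j + 1))) a := by rw [e]
      exact hkmin (k - (j + 1)) (by omega) (by rw [← this, hkspec])
    rw [h1, Equiv.swap_apply_of_ne_of_ne hne1 hne2]
  have horbit : ∀ m : ℕ, ∃ j : ℕ, j < k ∧ (ρ ^ m) a = (π ^ j) a := by
    intro m
    induction m with
    | zero => exact ⟨0, hk0, by simp⟩
    | succ l ih =>
      obtain ⟨j, hj, hl⟩ := ih
      rw [pow_succ', Equiv.Perm.mul_apply, hl]
      by_cases hcase : j + 1 < k
      · exact ⟨j + 1, hcase, hsub j hcase⟩
      · have hjk : j + 1 = k := by omega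
        refine ⟨0, hk0, ?_⟩
        have h1 : ρ ((π ^ j) a) = Equiv.swap a b ((π ^ (j + 1)) a) := by
          rw [hρ, Equiv.Perm.mul_apply, pow_succ', Equiv.Perm.mul_apply]
        rw [h1, hjk, hkspec, Equiv.swap_apply_right]
        simp
  intro hc
  obtain ⟨i, -, hi⟩ := hc.exists_pow_eq'
  obtain ⟨j, hj, he⟩ := horbit i
  rw [hi] at he
  exact hkmin j hj he.symm

theorem swap_mul_covers {π : Perm α} {a b : α} (htot : ∀ x, π.SameCycle a x) (x : α) :
    (Equiv.swap a b * π).SameCycle x a ∨ (Equiv.swap a b * π).SameCycle x b := by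
  classical
  set ρ := Equiv.swap a b * π with hρ
  obtain ⟨m, -, hm⟩ := (htot x).exists_pow_eq'
  clear hm
  -- we prove for all m the claim about (π ^ m) a, then specialize
  have key : ∀ m : ℕ, ρ.SameCycle ((π ^ m) a) a ∨ ρ.SameCycle ((π ^ m) a) b := by
    intro m
    induction m with
    | zero => exact Or.inl (by simp; exact SameCycle.refl _ _)
    | succ l ih =>
      have happ : (π ^ (l + 1)) a = Equiv.swap a b (ρ ((π ^ l) a)) := by
        rw [hρ, Equiv.Perm.mul_apply, Equiv.swap_apply_self, pow_succ', Equiv.Perm.mul_apply]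
      by_cases h1 : ρ ((π ^ l) a) = a
      · rw [happ, h1, Equiv.swap_apply_left]
        exact Or.inr (SameCycle.refl _ _)
      · by_cases h2 : ρ ((π ^ l) a) = b
        · rw [happ, h2, Equiv.swap_apply_right]
          exact Or.inl (SameCycle.refl _ _)
        · rw [happ, Equiv.swap_apply_of_ne_of_ne h1 h2]
          rcases ih with ih | ih
          · exact Or.inl ((sc_apply (SameCycle.refl ρ _)).symm.trans ih)
          · exact Or.inr ((sc_apply (SameCycle.refl ρ _)).symm.trans ih)
  obtain ⟨m, -, hm⟩ := (htot x).exists_pow_eq'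
  rw [← hm]
  exact key m

lemma cls_fixed {π : Perm α} {x : α} (h : π x = x) : cls π x = {x} := by
  ext y
  simp only [mem_cls, Finset.mem_singleton]
  constructor
  · rintro ⟨i, hi⟩
    rw [Equiv.Perm.zpow_apply_eq_self_of_apply_eq_self h] at hi
    exact hi.symm
  · rintro rfl; exact SameCycle.refl _ _

lemma cls_moved {π : Perm α} {x : α} (h : π x ≠ x) : cls π x = (π.cycleOf x).support := by
  ext y
  rw [mem_cls, Equiv.Perm.mem_support_cycleOf_iff,
    and_iff_left (Equiv.Perm.mem_support.2 h)]

lemma cycleCount_eq_nOrbits {d : ℕ} (π : Perm (Fin d)) : cycleCount π = nOrbits π := by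
  classical
  have himage : univ.image (cls π) =
      ((π.supportᶜ).image fun x => ({x} : Finset (Fin d))) ∪
        π.cycleFactorsFinset.image Equiv.Perm.support := by
    ext s
    simp only [Finset.mem_image, Finset.mem_union]
    constructor
    · rintro ⟨x, -, rfl⟩
      by_cases hx : π x = x
      · exact Or.inl ⟨x, by simp [Equiv.Perm.mem_support, hx], (cls_fixed hx).symm⟩
      · exact Or.inr ⟨π.cycleOf x,
          Equiv.Perm.cycleOf_mem_cycleFactorsFinset_iff.2 (Equiv.Perm.mem_support.2 hx),
          (cls_moved hx).symm⟩
    · rintro (⟨x, hx, rfl⟩ | ⟨c, hc, rfl⟩)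
      · have hfix : π x = x := by
          simpa [Equiv.Perm.mem_support] using (Finset.mem_compl.1 hx)
        exact ⟨x, Finset.mem_univ _, cls_fixed hfix⟩
      · obtain ⟨x, hx1, -⟩ := (Equiv.Perm.mem_cycleFactorsFinset_iff.1 hc).1
        have hxs : x ∈ c.support := Equiv.Perm.mem_support.2 hx1
        have hcx : c = π.cycleOf x := Equiv.Perm.cycle_is_cycleOf hxs hc
        have hπx : π x ≠ x := by
          have := (Equiv.Perm.mem_cycleFactorsFinset_iff.1 hc).2 x hxs
          rw [← this]; exact hx1
        exact ⟨x, Finset.mem_univ _, by rw [cls_moved hπx, ← hcx]⟩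
  have hdisj : Disjoint ((π.supportᶜ).image fun x => ({x} : Finset (Fin d)))
      (π.cycleFactorsFinset.image Equiv.Perm.support) := by
    rw [Finset.disjoint_left]
    rintro s hs1 hs2
    obtain ⟨x, hx, rfl⟩ := Finset.mem_image.1 hs1
    obtain ⟨c, hc, hcs⟩ := Finset.mem_image.1 hs2
    have hxc : x ∈ c.support := by rw [hcs]; exact Finset.mem_singleton_self x
    have h1 : c x = π x := (Equiv.Perm.mem_cycleFactorsFinset_iff.1 hc).2 x hxc
    have h2 : c x ≠ x := Equiv.Perm.mem_support.1 hxc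
    have : π x = x := by simpa [Equiv.Perm.mem_support] using (Finset.mem_compl.1 hx)
    exact h2 (h1.trans this)
  have hcard1 : ((π.supportᶜ).image fun x => ({x} : Finset (Fin d))).card = d - π.support.card := by
    rw [Finset.card_image_of_injective _ Finset.singleton_injective, Finset.card_compl]
    simp
  have hcard2 : (π.cycleFactorsFinset.image Equiv.Perm.support).card = π.cycleFactorsFinset.card := by
    apply Finset.card_image_of_injOn
    intro c1 h1 c2 h2 hsupp
    obtain ⟨x, hx1, -⟩ := (Equiv.Perm.mem_cycleFactorsFinset_iff.1 h1).1
    have hxs1 : x ∈ c1.support := Equiv.Perm.mem_support.2 hx1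
    have hxs2 : x ∈ c2.support := by rw [← hsupp]; exact hxs1
    rw [Equiv.Perm.cycle_is_cycleOf hxs1 h1, Equiv.Perm.cycle_is_cycleOf hxs2 h2]
  have hct : π.cycleType.card = π.cycleFactorsFinset.card := by
    rw [Equiv.Perm.cycleType_def, Multiset.card_map]; rfl
  unfold nOrbits cycleCount
  rw [himage, Finset.card_union_of_disjoint hdisj, hcard1, hcard2, hct]
  omega

lemma cycleCount_conj {d : ℕ} (ω π : Perm (Fin d)) : cycleCount (ω * π * ω⁻¹) = cycleCount π := by
  unfold cycleCount
  rw [Equiv.Perm.cycleType_conj, Equiv.Perm.card_support_conj]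

lemma one_le_cycleCount {d : ℕ} (hd : 0 < d) (π : Perm (Fin d)) : 1 ≤ cycleCount π := by
  have : Nonempty (Fin d) := ⟨⟨0, hd⟩⟩
  rw [cycleCount_eq_nOrbits]
  exact one_le_nOrbits π

lemma nOrbits_eq_card_image {π : Perm α} {f : α → ℕ}
    (hf : ∀ x y, π.SameCycle x y ↔ f x = f y) :
    nOrbits π = (univ.image f).card := by
  classical
  have hcls : ∀ x, cls π x = univ.filter fun y => f y = f x := by
    intro x; ext y
    simp only [mem_cls, Finset.mem_filter, Finset.mem_univ, true_and, hf]
    exact ⟨fun h => h.symm, fun h => h.symm⟩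
  have him : univ.image (cls π) = (univ.image f).image
      (fun v => univ.filter fun y => f y = v) := by
    ext s
    simp only [Finset.mem_image]
    constructor
    · rintro ⟨x, -, rfl⟩
      exact ⟨f x, ⟨x, Finset.mem_univ _, rfl⟩, (hcls x).symm⟩
    · rintro ⟨v, ⟨x, -, rfl⟩, rfl⟩
      exact ⟨x, Finset.mem_univ _, hcls x⟩
  rw [nOrbits, him, Finset.card_image_of_injOn]
  intro v1 h1 v2 h2 he
  simp only at he
  obtain ⟨x1, -, rfl⟩ := Finset.mem_image.1 h1
  have hx1 : x1 ∈ univ.filter fun y => f y = f x1 := by simp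
  rw [he] at hx1
  exact (Finset.mem_filter.1 hx1).2

/-! ### blockPerm structure -/

def bIdx : List ℕ → ℕ → ℕ
  | [], _ => 0
  | m :: rest, x => if x < m then 0 else bIdx rest (x - m) + 1

def pcHom {β : Type*} (e : α ≃ β) : Perm α →* Perm β where
  toFun := e.permCongr
  map_one' := by ext x; simp
  map_mul' := fun p q => by ext x; simp

lemma permCongr_zpow {β : Type*} (e : α ≃ β) (π : Perm α) (i : ℤ) :
    (e.permCongr π) ^ i = e.permCongr (π ^ i) :=
  (map_zpow (pcHom e) π i).symm

lemma sameCycle_permCongr {β : Type*} {e : α ≃ β} {π : Perm α} {x y : α} :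
    (e.permCongr π).SameCycle (e x) (e y) ↔ π.SameCycle x y := by
  constructor <;> rintro ⟨i, hi⟩ <;> refine ⟨i, ?_⟩
  · rw [permCongr_zpow] at hi
    simpa using hi
  · rw [permCongr_zpow]
    simp [hi]

lemma sumCongr_zpow {β γ : Type*} (p : Perm β) (q : Perm γ) (i : ℤ) :
    (Equiv.Perm.sumCongr p q) ^ i = Equiv.Perm.sumCongr (p ^ i) (q ^ i) := by
  have h := map_zpow (Equiv.Perm.sumCongrHom β γ) (p, q) i
  have h2 : ((p, q) : Perm β × Perm γ) ^ i = (p ^ i, q ^ i) := by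
    apply Prod.ext
    · exact map_zpow (MonoidHom.fst _ _) (p, q) i
    · exact map_zpow (MonoidHom.snd _ _) (p, q) i
  rw [h2] at h
  simpa using h.symm

lemma sameCycle_sumCongr_inl {β γ : Type*} {p : Perm β} {q : Perm γ} {x y : β} :
    (Equiv.Perm.sumCongr p q).SameCycle (Sum.inl x) (Sum.inl y) ↔ p.SameCycle x y := by
  constructor <;> rintro ⟨i, hi⟩ <;> refine ⟨i, ?_⟩
  · rw [sumCongr_zpow] at hi
    simpa using hi
  · rw [sumCongr_zpow]
    simp [hi]

lemma not_sameCycle_sumCongr_inl_inr {β γ : Type*} {p : Perm β} {q : Perm γ} {x : β} {y : γ} :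
    ¬(Equiv.Perm.sumCongr p q).SameCycle (Sum.inl x) (Sum.inr y) := by
  rintro ⟨i, hi⟩
  rw [sumCongr_zpow] at hi
  simp at hi

lemma sameCycle_sumCongr_inr {β γ : Type*} {p : Perm β} {q : Perm γ} {x y : γ} :
    (Equiv.Perm.sumCongr p q).SameCycle (Sum.inr x) (Sum.inr y) ↔ q.SameCycle x y := by
  constructor <;> rintro ⟨i, hi⟩ <;> refine ⟨i, ?_⟩
  · rw [sumCongr_zpow] at hi
    simpa using hi
  · rw [sumCongr_zpow]
    simp [hi]

lemma sameCycle_finRotate : ∀ {m : ℕ} (x y : Fin m), (finRotate m).SameCycle x y := by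
  intro m
  match m with
  | 0 => exact fun x => x.elim0
  | 1 => intro x y; rw [Subsingleton.elim x y]
  | (k + 2) =>
    intro x y
    apply isCycle_finRotate.sameCycle
    · rw [← Equiv.Perm.mem_support, support_finRotate]; exact Finset.mem_univ _
    · rw [← Equiv.Perm.mem_support, support_finRotate]; exact Finset.mem_univ _

lemma blockPerm_sameCycle : ∀ (μ : List ℕ) (x y : Fin μ.sum),
    (blockPerm μ).SameCycle x y ↔ bIdx μ x.val = bIdx μ y.val := by
  intro μ
  induction μ with
  | nil => exact fun x y => x.elim0
  | cons m rest ih =>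
    have hsum : m + rest.sum = (m :: rest).sum := by simp
    set E : Fin m ⊕ Fin rest.sum ≃ Fin ((m :: rest).sum) :=
      finSumFinEquiv.trans (finCongr hsum) with hE
    have hbp : blockPerm (m :: rest) =
        E.permCongr (Equiv.Perm.sumCongr (finRotate m) (blockPerm rest)) := by
      ext z
      simp [blockPerm, Equiv.permCongr_apply, hE]
      rfl
    have hEl : ∀ a : Fin m, ((E (Sum.inl a)) : ℕ) = (a : ℕ) := by
      intro a; show (finSumFinEquiv (Sum.inl a) : Fin (m + rest.sum)).val = a; simp
    have hEr : ∀ b : Fin rest.sum, ((E (Sum.inr b)) : ℕ) = m + (b : ℕ) := by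
      intro b; show (finSumFinEquiv (Sum.inr b) : Fin (m + rest.sum)).val = m + b; simp
    have hBl : ∀ a : Fin m, bIdx (m :: rest) ((E (Sum.inl a)) : ℕ) = 0 := by
      intro a; rw [hEl]; simp [bIdx, a.isLt]
    have hBr : ∀ b : Fin rest.sum,
        bIdx (m :: rest) ((E (Sum.inr b)) : ℕ) = bIdx rest (b : ℕ) + 1 := by
      intro b
      rw [hEr]
      have h1 : ¬(m + (b : ℕ) < m) := by omega
      simp [bIdx, h1]
    intro x y
    obtain ⟨u, rfl⟩ := E.surjective x
    obtain ⟨v, rfl⟩ := E.surjective y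
    rw [hbp, sameCycle_permCongr]
    rcases u with a | a <;> rcases v with b | b
    · rw [hBl, hBl, sameCycle_sumCongr_inl]
      exact iff_of_true (sameCycle_finRotate a b) rfl
    · rw [hBl, hBr]
      exact iff_of_false not_sameCycle_sumCongr_inl_inr (by omega)
    · rw [hBl, hBr]
      exact iff_of_false (fun h => not_sameCycle_sumCongr_inl_inr h.symm) (by omega)
    · rw [hBr, hBr, sameCycle_sumCongr_inr, ih a b]
      omega

lemma bIdx_lt : ∀ (μ : List ℕ), (∀ p ∈ μ, 1 ≤ p) → ∀ x, x < μ.sum → bIdx μ x < μ.length := by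
  intro μ
  induction μ with
  | nil => intro _ x hx; simp at hx
  | cons m rest ih =>
    intro hμ x hx
    by_cases h : x < m
    · simp [bIdx, h]
    · have h1 : bIdx rest (x - m) < rest.length := by
        apply ih (fun p hp => hμ p (List.mem_cons_of_mem _ hp))
        have : rest.sum = (m :: rest).sum - m := by simp
        omega
      simp only [bIdx, if_neg h, List.length_cons]
      omega

lemma bIdx_surj : ∀ (μ : List ℕ), (∀ p ∈ μ, 1 ≤ p) → ∀ j, j < μ.length →
    ∃ x, x < μ.sum ∧ bIdx μ x = j := by
  intro μ
  induction μ with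
  | nil => intro _ j hj; simp at hj
  | cons m rest ih =>
    intro hμ j hj
    have hm : 1 ≤ m := hμ m (List.mem_cons_self)
    rcases j with _ | j
    · exact ⟨0, by simp only [List.sum_cons]; omega, by simp [bIdx]; omega⟩
    · obtain ⟨x, hx1, hx2⟩ := ih (fun p hp => hμ p (List.mem_cons_of_mem _ hp)) j
        (by simpa using Nat.lt_of_succ_lt_succ hj)
      refine ⟨m + x, by simp only [List.sum_cons]; omega, ?_⟩
      have h1 : ¬(m + x < m) := by omega
      simp [bIdx, h1, hx2]

lemma sum_pos (μ : List ℕ) (hμ : ∀ p ∈ μ, 1 ≤ p) (hn : 1 ≤ μ.length) : 0 < μ.sum := by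
  cases μ with
  | nil => simp at hn
  | cons m rest =>
    have := hμ m (List.mem_cons_self)
    simp only [List.sum_cons]
    omega

lemma nOrbits_blockPerm (μ : List ℕ) (hμ : ∀ p ∈ μ, 1 ≤ p) :
    nOrbits (blockPerm μ) = μ.length := by
  rw [nOrbits_eq_card_image (f := fun x : Fin μ.sum => bIdx μ x.val)
    (fun x y => blockPerm_sameCycle μ x y)]
  have : Finset.image (fun x : Fin μ.sum => bIdx μ x.val) univ = Finset.range μ.length := by
    ext j
    simp only [Finset.mem_image, Finset.mem_range, Finset.mem_univ, true_and]
    constructor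
    · rintro ⟨x, rfl⟩; exact bIdx_lt μ hμ x.val x.isLt
    · intro hj
      obtain ⟨x, hx1, hx2⟩ := bIdx_surj μ hμ j hj
      exact ⟨⟨x, hx1⟩, hx2⟩
  rw [this, Finset.card_range]

noncomputable def repPt (μ : List ℕ) (hμ : ∀ p ∈ μ, 1 ≤ p) (hn : 1 ≤ μ.length) (j : ℕ) :
    Fin μ.sum :=
  if h : j < μ.length then ⟨(bIdx_surj μ hμ j h).choose, (bIdx_surj μ hμ j h).choose_spec.1⟩
  else ⟨0, sum_pos μ hμ hn⟩

lemma repPt_spec (μ : List ℕ) (hμ : ∀ p ∈ μ, 1 ≤ p) (hn : 1 ≤ μ.length) {j : ℕ}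
    (h : j < μ.length) : bIdx μ (repPt μ hμ hn j).val = j := by
  rw [repPt, dif_pos h]
  exact (bIdx_surj μ hμ j h).choose_spec.2

lemma base_run (μ : List ℕ) (hμ : ∀ p ∈ μ, 1 ≤ p) (hn : 1 ≤ μ.length) :
    ∀ i, i < μ.length →
    ∃ π₁ π₂ : Perm (Fin μ.sum), π₁ * π₂ = blockPerm μ ∧ nOrbits π₁ + i = μ.sum ∧
      (∀ x y : Fin μ.sum, π₂.SameCycle x y ↔
        (bIdx μ x.val = bIdx μ y.val ∨ (bIdx μ x.val ≤ i ∧ bIdx μ y.val ≤ i))) ∧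
      (∀ x y : Fin μ.sum, π₁.SameCycle x y ↔
        (x = y ∨ ((bIdx μ x.val ≤ i ∧ x = repPt μ hμ hn (bIdx μ x.val)) ∧
                  (bIdx μ y.val ≤ i ∧ y = repPt μ hμ hn (bIdx μ y.val))))) := by
  intro i
  induction i with
  | zero =>
    intro _
    refine ⟨1, blockPerm μ, one_mul _, ?_, ?_, ?_⟩
    · rw [nOrbits_one]; simp
    · intro x y
      rw [blockPerm_sameCycle]
      constructor
      · exact fun h => Or.inl h
      · rintro (h | ⟨h1, h2⟩)
        · exact h
        · omega
    · intro x y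
      constructor
      · rintro ⟨i, hi⟩
        simp only [one_zpow, Equiv.Perm.one_apply] at hi
        exact Or.inl hi
      · rintro (rfl | ⟨⟨h1, h2⟩, ⟨h3, h4⟩⟩)
        · exact SameCycle.refl _ _
        · have hx0 : bIdx μ x.val = 0 := by omega
          have hy0 : bIdx μ y.val = 0 := by omega
          rw [hx0] at h2
          rw [hy0] at h4
          have hxy : x = y := h2.trans h4.symm
          rw [hxy]
  | succ k ihk =>
    intro hk
    obtain ⟨π₁, π₂, hprod, hcnt, hsc2, hsc1⟩ := ihk (by omega)
    have hB0 : bIdx μ (repPt μ hμ hn 0).val = 0 := repPt_spec μ hμ hn (by omega)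
    have hB' : bIdx μ (repPt μ hμ hn (k + 1)).val = k + 1 := repPt_spec μ hμ hn hk
    have hner1 : ¬π₁.SameCycle (repPt μ hμ hn 0) (repPt μ hμ hn (k + 1)) := by
      rw [hsc1]
      rintro (he | ⟨-, ⟨hb, -⟩⟩)
      · have : bIdx μ (repPt μ hμ hn 0).val = bIdx μ (repPt μ hμ hn (k + 1)).val := by rw [he]
        omega
      · omega
    have hner2 : ¬π₂.SameCycle (repPt μ hμ hn 0) (repPt μ hμ hn (k + 1)) := by
      rw [hsc2]
      rintro (he | ⟨h1, h2⟩) <;> omega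
    have hinv : ¬(π₁⁻¹).SameCycle (repPt μ hμ hn 0) (repPt μ hμ hn (k + 1)) := by
      rw [Equiv.Perm.sameCycle_inv]; exact hner1
    refine ⟨π₁ * Equiv.swap (repPt μ hμ hn 0) (repPt μ hμ hn (k + 1)),
      Equiv.swap (repPt μ hμ hn 0) (repPt μ hμ hn (k + 1)) * π₂, ?_, ?_, ?_, ?_⟩
    · rw [mul_assoc, ← mul_assoc (Equiv.swap _ _), Equiv.swap_mul_self, one_mul, hprod]
    · have e1 := nOrbits_mul_swap π₁ (repPt μ hμ hn 0) (repPt μ hμ hn (k + 1))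
      have e2 := nOrbits_swap_mul hinv
      rw [nOrbits_inv] at e2
      omega
    · intro x y
      have hdesc := sameCycle_swap_mul_iff hner2 x y
      have hA : ∀ w, π₂.SameCycle (repPt μ hμ hn 0) w ↔ bIdx μ w.val ≤ k := by
        intro w
        rw [hsc2]
        constructor
        · rintro (he | ⟨h1, h2⟩) <;> omega
        · intro h; exact Or.inr ⟨by omega, h⟩
      have hC : ∀ w, π₂.SameCycle (repPt μ hμ hn (k + 1)) w ↔ bIdx μ w.val = k + 1 := by
        intro w
        rw [hsc2]
        constructor
        · rintro (he | ⟨h1, h2⟩) <;> omega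
        · intro h; exact Or.inl (by omega)
      rw [hdesc, hsc2 x y, hA x, hA y, hC x, hC y]
      omega
    · intro x y
      have hiff : (π₁ * Equiv.swap (repPt μ hμ hn 0) (repPt μ hμ hn (k + 1))).SameCycle x y ↔
          (Equiv.swap (repPt μ hμ hn 0) (repPt μ hμ hn (k + 1)) * π₁⁻¹).SameCycle x y :=
        sameCycle_mul_swap
      have hdesc := sameCycle_swap_mul_iff hinv x y
      have hA1 : ∀ w, π₁.SameCycle (repPt μ hμ hn 0) w ↔
          (bIdx μ w.val ≤ k ∧ w = repPt μ hμ hn (bIdx μ w.val)) := by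
        intro w
        rw [hsc1]
        constructor
        · rintro (he | ⟨-, h2⟩)
          · refine ⟨?_, ?_⟩
            · rw [← he]; omega
            · rw [← he, hB0]
          · exact h2
        · intro h
          exact Or.inr ⟨⟨by omega, by rw [hB0]⟩, h⟩
      have hC1 : ∀ w, π₁.SameCycle (repPt μ hμ hn (k + 1)) w ↔ w = repPt μ hμ hn (k + 1) := by
        intro w
        rw [hsc1]
        constructor
        · rintro (he | ⟨⟨h1, -⟩, -⟩)
          · exact he.symm
          · omega
        · rintro rfl; exact Or.inl rfl
      have hR' : ∀ w : Fin μ.sum, (bIdx μ w.val ≤ k + 1 ∧ w = repPt μ hμ hn (bIdx μ w.val)) ↔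
          ((bIdx μ w.val ≤ k ∧ w = repPt μ hμ hn (bIdx μ w.val)) ∨ w = repPt μ hμ hn (k + 1)) := by
        intro w
        constructor
        · rintro ⟨h1, h2⟩
          by_cases hc : bIdx μ w.val ≤ k
          · exact Or.inl ⟨hc, h2⟩
          · have he : bIdx μ w.val = k + 1 := by omega
            rw [he] at h2
            exact Or.inr h2
        · rintro (⟨h1, h2⟩ | rfl)
          · exact ⟨by omega, h2⟩
          · exact ⟨by omega, by rw [hB']⟩
      rw [hiff, hdesc, Equiv.Perm.sameCycle_inv, Equiv.Perm.sameCycle_inv,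
        Equiv.Perm.sameCycle_inv, Equiv.Perm.sameCycle_inv, Equiv.Perm.sameCycle_inv,
        hsc1 x y, hA1 x, hA1 y, hC1 x, hC1 y, hR' x, hR' y]
      constructor
      · rintro ((he | ⟨h1, h2⟩) | ⟨h1, h2⟩ | ⟨h1, h2⟩)
        · exact Or.inl he
        · exact Or.inr ⟨Or.inl h1, Or.inl h2⟩
        · exact Or.inr ⟨Or.inl h1, Or.inr h2⟩
        · exact Or.inr ⟨Or.inr h1, Or.inl h2⟩
      · rintro (he | ⟨(h1 | h1), (h2 | h2)⟩)
        · exact Or.inl (Or.inl he)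
        · exact Or.inl (Or.inr ⟨h1, h2⟩)
        · exact Or.inr (Or.inl ⟨h1, h2⟩)
        · exact Or.inr (Or.inr ⟨h1, h2⟩)
        · exact Or.inl (Or.inl (h1.trans h2.symm))

lemma step2 {d : ℕ} {σ π₁ π₂ : Perm (Fin d)} {a b z : Fin d}
    (hprod : π₁ * π₂ = σ)
    (hab : π₁.SameCycle a b)
    (hnab : ¬π₂.SameCycle a b)
    (hcov : ∀ x, π₂.SameCycle x a ∨ π₂.SameCycle x b)
    (hz1 : ¬π₁.SameCycle z b)
    (hz2 : π₂.SameCycle z a) :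
    ∃ ρ₁ ρ₂ : Perm (Fin d), ρ₁ * ρ₂ = σ ∧ nOrbits π₁ = nOrbits ρ₁ + 1 ∧
      (∀ x y, ρ₂.SameCycle x y) := by
  refine ⟨π₁ * Equiv.swap z b, Equiv.swap z b * π₂, ?_, ?_, ?_⟩
  · rw [mul_assoc, ← mul_assoc (Equiv.swap z b), Equiv.swap_mul_self, one_mul, hprod]
  · have hinv : ¬(π₁⁻¹).SameCycle z b := by rw [Equiv.Perm.sameCycle_inv]; exact hz1
    have e1 := nOrbits_mul_swap π₁ z b
    have e2 := nOrbits_swap_mul hinv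
    rw [nOrbits_inv] at e2
    omega
  · have hnzb : ¬π₂.SameCycle z b := fun h => hnab (hz2.symm.trans h)
    have hdesc := sameCycle_swap_mul_iff hnzb
    have hxb : ∀ x, (Equiv.swap z b * π₂).SameCycle x b := by
      intro x
      rcases hcov x with h | h
      · exact (hdesc x b).2 (Or.inr (Or.inl ⟨hz2.trans h.symm, SameCycle.refl _ _⟩))
      · exact (hdesc x b).2 (Or.inl h)
    intro x y
    exact (hxb x).trans (hxb y).symm

lemma genus_step {d : ℕ} (hd : 0 < d) {σ π₁ π₂ : Perm (Fin d)}
    (hprod : π₁ * π₂ = σ) (h3 : 3 ≤ nOrbits π₁) (htot : ∀ x y, π₂.SameCycle x y) :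
    ∃ ρ₁ ρ₂ : Perm (Fin d), ρ₁ * ρ₂ = σ ∧ nOrbits π₁ = nOrbits ρ₁ + 2 ∧
      (∀ x y, ρ₂.SameCycle x y) := by
  have hne : Nonempty (Fin d) := ⟨⟨0, hd⟩⟩
  obtain ⟨b0, hb0⟩ := exists_not_sameCycle (π := π₁) (by omega) (⟨0, hd⟩ : Fin d)
  set a : Fin d := (⟨0, hd⟩ : Fin d) with ha
  have hab : a ≠ b0 := fun e => hb0 (e ▸ SameCycle.refl _ _)
  have hinv : ¬(π₁⁻¹).SameCycle a b0 := by rw [Equiv.Perm.sameCycle_inv]; exact hb0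
  have hprod' : (π₁ * Equiv.swap a b0) * (Equiv.swap a b0 * π₂) = σ := by
    rw [mul_assoc, ← mul_assoc (Equiv.swap a b0), Equiv.swap_mul_self, one_mul, hprod]
  have hcnt' : nOrbits π₁ = nOrbits (π₁ * Equiv.swap a b0) + 1 := by
    have e1 := nOrbits_mul_swap π₁ a b0
    have e2 := nOrbits_swap_mul hinv
    rw [nOrbits_inv] at e2
    omega
  have hsc' : (π₁ * Equiv.swap a b0).SameCycle a b0 := by
    rw [sameCycle_mul_swap]
    exact (sameCycle_swap_mul_iff hinv a b0).2
      (Or.inr (Or.inl ⟨SameCycle.refl _ _, SameCycle.refl _ _⟩))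
  have hnab' : ¬(Equiv.swap a b0 * π₂).SameCycle a b0 := not_sameCycle_swap_mul hab (htot a b0)
  have hcov' : ∀ x, (Equiv.swap a b0 * π₂).SameCycle x a ∨ (Equiv.swap a b0 * π₂).SameCycle x b0 :=
    swap_mul_covers (fun x => htot a x)
  obtain ⟨z, hz⟩ := exists_not_sameCycle (π := π₁ * Equiv.swap a b0) (by omega) a
  have hzb : ¬(π₁ * Equiv.swap a b0).SameCycle z b0 := fun h => hz (hsc'.trans h.symm)
  have hza : ¬(π₁ * Equiv.swap a b0).SameCycle z a := fun h => hz h.symm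
  rcases hcov' z with hcase | hcase
  · obtain ⟨ρ₁, ρ₂, h1, h2, h3'⟩ := step2 hprod' hsc' hnab' hcov' hzb hcase
    exact ⟨ρ₁, ρ₂, h1, by omega, h3'⟩
  · obtain ⟨ρ₁, ρ₂, h1, h2, h3'⟩ := step2 hprod' hsc'.symm (fun h => hnab' h.symm)
      (fun x => (hcov' x).symm) hza hcase
    exact ⟨ρ₁, ρ₂, h1, by omega, h3'⟩

lemma exists_witness (μ : List ℕ) (hμ : ∀ p ∈ μ, 1 ≤ p) (hn : 1 ≤ μ.length) :
    ∀ g : ℕ, μ.length + 2 * g ≤ μ.sum →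
    ∃ π₁ π₂ : Perm (Fin μ.sum), π₁ * π₂ = blockPerm μ ∧
      nOrbits π₁ + (μ.length + 2 * g) = μ.sum + 1 ∧ (∀ x y, π₂.SameCycle x y) := by
  intro g
  induction g with
  | zero =>
    intro hd
    obtain ⟨π₁, π₂, hprod, hcnt, hsc2, hsc1⟩ := base_run μ hμ hn (μ.length - 1) (by omega)
    refine ⟨π₁, π₂, hprod, by omega, ?_⟩
    intro x y
    rw [hsc2]
    right
    have h1 := bIdx_lt μ hμ x.val x.isLt
    have h2 := bIdx_lt μ hμ y.val y.isLt
    omega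
  | succ k ih =>
    intro hd
    obtain ⟨π₁, π₂, hprod, hcnt, htot⟩ := ih (by omega)
    have hd0 : 0 < μ.sum := sum_pos μ hμ hn
    obtain ⟨ρ₁, ρ₂, h1, h2, h3⟩ := genus_step hd0 hprod (by omega) htot
    exact ⟨ρ₁, ρ₂, h1, by omega, h3⟩

lemma coeff_sum_X_pow {β : Type*} (s : Finset β) (c : β → ℕ) (k : ℕ) :
    (∑ p ∈ s, (Polynomial.X : Polynomial ℚ) ^ c p).coeff k
      = ((s.filter fun p => c p = k).card : ℚ) := by
  classical
  rw [Polynomial.finset_sum_coeff]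
  rw [Finset.sum_congr rfl fun p _ => Polynomial.coeff_X_pow (c p) k]
  rw [Finset.sum_boole]
  norm_cast
  apply congrArg
  apply Finset.filter_congr
  intro p _
  simp [eq_comm]

lemma trans_congr {d : ℕ} {p q r s : Perm (Fin d)} (h : IsTransitivePair p q)
    (hsub : ({p, q} : Set (Perm (Fin d))) ⊆ ↑(Subgroup.closure {r, s})) :
    IsTransitivePair r s := by
  intro x y
  obtain ⟨h', hm, hxy⟩ := h x y
  refine ⟨h', ?_, hxy⟩
  have hle : Subgroup.closure {p, q} ≤ Subgroup.closure {r, s} :=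
    (Subgroup.closure_le _).2 hsub
  exact hle hm

end DessinAux

/-- **Vanishing, degree and symmetry** for the weighted dessin d'enfant enumeration:
if `|μ| < 2g + n` then `D^t_{g,n}(μ) = 0`; if `|μ| ≥ 2g + n` then `D^t_{g,n}(μ)` is
a nonzero polynomial of degree exactly `|μ| + 1 - 2g - n` whose coefficients satisfy
the palindromic symmetry `a_i = a_{|μ| + 2 - 2g - n - i}`. -/
theorem dessin_vanishing_degree_symmetry (g : ℕ) (μ : List ℕ)
    (hn : 1 ≤ μ.length) (hμ : ∀ m ∈ μ, 1 ≤ m) :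
    (μ.sum < 2 * g + μ.length → dessin g μ = 0) ∧
    (2 * g + μ.length ≤ μ.sum →
      dessin g μ ≠ 0 ∧
      (dessin g μ).natDegree = μ.sum + 1 - 2 * g - μ.length ∧
      ∀ i ≤ μ.sum + 2 - 2 * g - μ.length,
        (dessin g μ).coeff i = (dessin g μ).coeff (μ.sum + 2 - 2 * g - μ.length - i)) := by
  classical
  open DessinAux Equiv Equiv.Perm Finset in
  · have hd1 : 0 < μ.sum := DessinAux.sum_pos μ hμ hn
    have hnne : Nonempty (Fin μ.sum) := ⟨⟨0, hd1⟩⟩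
    set F := Finset.univ.filter
      (fun p : Equiv.Perm (Fin μ.sum) × Equiv.Perm (Fin μ.sum) =>
        p.1 * p.2 = blockPerm μ ∧ IsTransitivePair p.1 p.2 ∧
        (cycleCount p.1 + cycleCount p.2 : ℤ)
          = (μ.sum : ℤ) + 2 - 2 * ((g : ℤ)) - μ.length) with hF
    have hD : dessin (g : ℤ) μ = ((μ.map fun m => (m : ℚ)).prod)⁻¹ •
        ∑ p ∈ F, Polynomial.X ^ cycleCount p.1 := by
      rw [hF]
      simp only [dessin]
      rw [if_pos ⟨Int.natCast_nonneg g, hμ⟩]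
    have hprodpos : (0 : ℚ) < (μ.map fun m => (m : ℚ)).prod := by
      have key : ∀ (l : List ℕ), (∀ m ∈ l, 1 ≤ m) → (0:ℚ) < (l.map fun m => (m:ℚ)).prod := by
        intro l
        induction l with
        | nil => intro _; simp
        | cons m rest ih =>
          intro h
          have h1 : 0 < m := h m (List.mem_cons_self)
          have h2 := ih (fun p hp => h p (List.mem_cons_of_mem _ hp))
          have h1q : (0:ℚ) < (m:ℚ) := by exact_mod_cast h1
          simp only [List.flatMap_cons, List.map_append, List.map_cons, List.prod_cons,
            List.map_nil, List.prod_append, List.singleton_append, pure]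
          exact mul_pos h1q h2
      exact key μ hμ
    have hcI0 : ((μ.map fun m => (m : ℚ)).prod)⁻¹ ≠ 0 := inv_ne_zero (ne_of_gt hprodpos)
    have hmemF : ∀ p : Equiv.Perm (Fin μ.sum) × Equiv.Perm (Fin μ.sum), p ∈ F ↔
        (p.1 * p.2 = blockPerm μ ∧ IsTransitivePair p.1 p.2 ∧
          (cycleCount p.1 + cycleCount p.2 : ℤ)
            = (μ.sum : ℤ) + 2 - 2 * ((g : ℤ)) - μ.length) := by
      intro p
      rw [hF, Finset.mem_filter]
      simp
    have hcoeff : ∀ k, (dessin (g : ℤ) μ).coeff k =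
        ((μ.map fun m => (m : ℚ)).prod)⁻¹ *
          ((F.filter fun p => cycleCount p.1 = k).card : ℚ) := by
      intro k
      rw [hD, Polynomial.coeff_smul, coeff_sum_X_pow, smul_eq_mul]
    constructor
    · -- vanishing
      intro hlt
      have hFe : F = ∅ := by
        apply Finset.eq_empty_of_forall_notMem
        intro p hp
        obtain ⟨-, -, h3⟩ := (hmemF p).1 hp
        have c1 := one_le_cycleCount hd1 p.1
        have c2 := one_le_cycleCount hd1 p.2
        omega
      rw [hD, hFe, Finset.sum_empty, smul_zero]
    · intro hge
      obtain ⟨π₁, π₂, hprod, hcnt, htot⟩ := exists_witness μ hμ hn g (by omega)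
      have hC1 : cycleCount π₁ = μ.sum + 1 - 2 * g - μ.length := by
        rw [cycleCount_eq_nOrbits]
        omega
      have hC2 : cycleCount π₂ = 1 := by
        rw [cycleCount_eq_nOrbits]
        exact nOrbits_eq_one_of_total htot
      have htrans : IsTransitivePair π₁ π₂ := by
        intro x y
        obtain ⟨i, hi⟩ := htot x y
        exact ⟨π₂ ^ i, Subgroup.zpow_mem _ (Subgroup.subset_closure (by simp)) i, hi⟩
      have hwit : (π₁, π₂) ∈ F := by
        rw [hmemF]
        refine ⟨hprod, htrans, ?_⟩
        simp only
        rw [hC1, hC2]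
        omega
      have hub : ∀ p ∈ F, cycleCount p.1 ≤ μ.sum + 1 - 2 * g - μ.length := by
        intro p hp
        obtain ⟨-, -, h3⟩ := (hmemF p).1 hp
        have c2 := one_le_cycleCount hd1 p.2
        omega
      have hne0 : (dessin (g : ℤ) μ).coeff (μ.sum + 1 - 2 * g - μ.length) ≠ 0 := by
        rw [hcoeff]
        apply mul_ne_zero hcI0
        rw [Nat.cast_ne_zero, ← Nat.pos_iff_ne_zero, Finset.card_pos]
        exact ⟨(π₁, π₂), Finset.mem_filter.2 ⟨hwit, hC1⟩⟩
      refine ⟨fun h => hne0 (by rw [h, Polynomial.coeff_zero]), ?_, ?_⟩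
      · -- natDegree
        apply le_antisymm
        · apply Polynomial.natDegree_le_iff_coeff_eq_zero.2
          intro N hN
          rw [hcoeff]
          have hFe : (F.filter fun p => cycleCount p.1 = N) = ∅ := by
            apply Finset.eq_empty_of_forall_notMem
            intro p hp
            obtain ⟨hp1, hp2⟩ := Finset.mem_filter.1 hp
            have := hub p hp1
            omega
          rw [hFe, Finset.card_empty, Nat.cast_zero, mul_zero]
        · exact Polynomial.le_natDegree_of_ne_zero hne0
      · -- symmetry
        intro i hi
        rw [hcoeff, hcoeff]
        congr 1
        have hcard : (F.filter fun p => cycleCount p.1 = i).card =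
            (F.filter fun p => cycleCount p.1 = (μ.sum + 2 - 2 * g - μ.length - i)).card := by
          apply Finset.card_nbij'
            (fun p => (p.1 * p.2 * p.1⁻¹, p.1)) (fun q => (q.2, q.2⁻¹ * q.1 * q.2))
          · intro p hp
            obtain ⟨hp0, hpc⟩ := Finset.mem_filter.1 hp
            obtain ⟨h1, h2, h3⟩ := (hmemF p).1 hp0
            rw [Finset.mem_coe, Finset.mem_filter]
            constructor
            · rw [hmemF]
              refine ⟨?_, ?_, ?_⟩
              · show p.1 * p.2 * p.1⁻¹ * p.1 = blockPerm μ
                have he : p.1 * p.2 * p.1⁻¹ * p.1 = p.1 * p.2 := by group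
                rw [he, h1]
              · show IsTransitivePair (p.1 * p.2 * p.1⁻¹) p.1
                apply trans_congr h2
                set K := Subgroup.closure {p.1 * p.2 * p.1⁻¹, p.1} with hK
                have ha : p.1 ∈ K := by
                  rw [hK]
                  exact Subgroup.subset_closure (Set.mem_insert_iff.2 (Or.inr rfl))
                have hb : p.1 * p.2 * p.1⁻¹ ∈ K := by
                  rw [hK]
                  exact Subgroup.subset_closure (Set.mem_insert_iff.2 (Or.inl rfl))
                intro w hw
                rcases Set.mem_insert_iff.1 hw with rfl | hw
                · exact SetLike.mem_coe.2 ha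
                · rw [Set.mem_singleton_iff] at hw
                  subst hw
                  rw [SetLike.mem_coe]
                  have he : p.2 = p.1⁻¹ * (p.1 * p.2 * p.1⁻¹) * p.1 := by group
                  rw [he]
                  exact mul_mem (mul_mem (inv_mem ha) hb) ha
              · show ((cycleCount (p.1 * p.2 * p.1⁻¹) : ℤ) + cycleCount p.1 : ℤ) = _
                rw [cycleCount_conj]
                omega
            · show cycleCount (p.1 * p.2 * p.1⁻¹) = _
              rw [cycleCount_conj]
              have c1 := one_le_cycleCount hd1 p.1
              omega
          · intro q hq
            obtain ⟨hq0, hqc⟩ := Finset.mem_filter.1 hq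
            obtain ⟨h1, h2, h3⟩ := (hmemF q).1 hq0
            rw [Finset.mem_coe, Finset.mem_filter]
            constructor
            · rw [hmemF]
              refine ⟨?_, ?_, ?_⟩
              · show q.2 * (q.2⁻¹ * q.1 * q.2) = blockPerm μ
                have he : q.2 * (q.2⁻¹ * q.1 * q.2) = q.1 * q.2 := by group
                rw [he, h1]
              · show IsTransitivePair q.2 (q.2⁻¹ * q.1 * q.2)
                apply trans_congr h2
                set K := Subgroup.closure {q.2, q.2⁻¹ * q.1 * q.2} with hK
                have ha : q.2 ∈ K := by
                  rw [hK]
                  exact Subgroup.subset_closure (Set.mem_insert_iff.2 (Or.inl rfl))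
                have hb : q.2⁻¹ * q.1 * q.2 ∈ K := by
                  rw [hK]
                  exact Subgroup.subset_closure (Set.mem_insert_iff.2 (Or.inr rfl))
                intro w hw
                rcases Set.mem_insert_iff.1 hw with rfl | hw
                · rw [SetLike.mem_coe]
                  have he : q.1 = q.2 * (q.2⁻¹ * q.1 * q.2) * q.2⁻¹ := by group
                  rw [he]
                  exact mul_mem (mul_mem ha hb) (inv_mem ha)
                · rw [Set.mem_singleton_iff] at hw
                  subst hw
                  exact SetLike.mem_coe.2 ha
              · show ((cycleCount q.2 : ℤ) + cycleCount (q.2⁻¹ * q.1 * q.2) : ℤ) = _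
                have he := cycleCount_conj q.2⁻¹ q.1
                rw [inv_inv] at he
                rw [he]
                omega
            · show cycleCount q.2 = i
              have he := one_le_cycleCount hd1 q.1
              omega
          · intro p hp
            refine Prod.ext ?_ ?_
            · rfl
            · show p.1⁻¹ * (p.1 * p.2 * p.1⁻¹) * p.1 = p.2
              group
          · intro q hq
            refine Prod.ext ?_ ?_
            · show q.2 * (q.2⁻¹ * q.1 * q.2) * q.2⁻¹ = q.1
              group
            · rfl
        rw [hcard]
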